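/- For all real (or complex) z with |z| < 1, the identity z·arcsin(z)/√(1−z²) = Σ_{m=1}^∞ (2z)^{2m} / (binom(2m,m) · 2m) holds. -/

import Mathlib

open Real

/-!
With `c n = 4 ^ n / ((2n + 1) * C(2n, n))`, put `G x = ∑ c n * x ^ (2n + 1)`. The recurrence
`(2n + 3) c (n + 1) = (2n + 2) c n` is the coefficientwise form of `(1 - x²) G' = 1 + x G`, which is
exactly what makes `arcsin x - √(1 - x²) G x` have derivative zero on `(-1, 1)`. As it vanishes at
`0`, `arcsin x = √(1 - x²) G x`, and the theorem follows because the `m`-th term of the series is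
`z * c m * z ^ (2m + 1)`.
-/

noncomputable def arcsinCoeff (n : ℕ) : ℝ := 4 ^ n / ((2 * n + 1) * Nat.centralBinom n)

lemma cast_centralBinom_pos (n : ℕ) : (0 : ℝ) < Nat.centralBinom n := by
  exact_mod_cast Nat.centralBinom_pos n

lemma arcsinCoeff_zero : arcsinCoeff 0 = 1 := by simp [arcsinCoeff]

lemma abs_arcsinCoeff_le_one (n : ℕ) : |arcsinCoeff n| ≤ 1 := by
  rw [abs_of_nonneg (by unfold arcsinCoeff; positivity)]
  rcases n.eq_zero_or_pos with rfl | hn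
  · rw [arcsinCoeff_zero]
  have h : (4 : ℝ) ^ n ≤ 2 * n * Nat.centralBinom n := by
    exact_mod_cast Nat.four_pow_le_two_mul_self_mul_centralBinom n hn
  have := cast_centralBinom_pos n
  rw [arcsinCoeff, div_le_one (by positivity)]
  linarith

lemma centralBinom_succ_mul_two_mul_succ (n : ℕ) :
    (Nat.centralBinom (n + 1) : ℝ) * (2 * (n + 1)) = 4 * (2 * n + 1) * Nat.centralBinom n := by
  have := Nat.succ_mul_centralBinom_succ n
  rify at this
  linear_combination 2 * this

lemma arcsinCoeff_succ (n : ℕ) :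
    (2 * n + 3) * arcsinCoeff (n + 1) = (2 * n + 2) * arcsinCoeff n := by
  have h := centralBinom_succ_mul_two_mul_succ n
  have := cast_centralBinom_pos n
  have := cast_centralBinom_pos (n + 1)
  unfold arcsinCoeff
  push_cast
  field_simp
  linear_combination -(2 * n + 3) * 4 ^ n * h

lemma two_mul_pow_div_choose_eq (m : ℕ) (z : ℝ) :
    (2 * z) ^ (2 * (m + 1)) / ((Nat.choose (2 * (m + 1)) (m + 1) : ℝ) * (2 * (m + 1))) =
      z * (arcsinCoeff m * z ^ (2 * m + 1)) := by
  have := cast_centralBinom_pos m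
  rw [← Nat.centralBinom_eq_two_mul_choose, centralBinom_succ_mul_two_mul_succ, arcsinCoeff,
    mul_pow, pow_mul, pow_mul]
  field_simp
  ring

lemma summable_two_mul_add_one_mul_pow_two_mul {r : ℝ} (hr : |r| < 1) :
    Summable fun n : ℕ => (2 * n + 1 : ℝ) * r ^ (2 * n) := by
  have hr2 : ‖r ^ 2‖ < 1 := by
    rw [norm_pow, Real.norm_eq_abs, sq_lt_one_iff_abs_lt_one, abs_abs]; exact hr
  have h1 := summable_pow_mul_geometric_of_norm_lt_one 1 hr2
  have h2 := summable_geometric_of_norm_lt_one hr2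
  refine ((h1.mul_left 2).add h2).congr fun n => ?_
  rw [pow_mul]; ring

section OddPowerSeries

variable {a : ℕ → ℝ}

lemma norm_two_mul_add_one_mul_pow_le (ha : ∀ n, |a n| ≤ 1) (n : ℕ) {y r : ℝ} (hy : |y| ≤ r) :
    ‖(2 * n + 1 : ℝ) * a n * y ^ (2 * n)‖ ≤ (2 * n + 1) * r ^ (2 * n) := by
  rw [Real.norm_eq_abs, abs_mul, abs_mul, abs_pow,
    abs_of_nonneg (by positivity : (0 : ℝ) ≤ 2 * n + 1)]
  calc (2 * n + 1) * |a n| * |y| ^ (2 * n) ≤ (2 * n + 1) * 1 * r ^ (2 * n) := by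
        gcongr
        exact ha n
    _ = _ := by ring

lemma summable_two_mul_add_one_mul_pow (ha : ∀ n, |a n| ≤ 1) {y : ℝ} (hy : |y| < 1) :
    Summable fun n : ℕ => (2 * n + 1 : ℝ) * a n * y ^ (2 * n) :=
  .of_norm_bounded (summable_two_mul_add_one_mul_pow_two_mul (r := |y|) (by rwa [abs_abs]))
    fun n => norm_two_mul_add_one_mul_pow_le ha n le_rfl

lemma summable_mul_pow_two_mul_add_one (ha : ∀ n, |a n| ≤ 1) {y : ℝ} (hy : |y| < 1) :
    Summable fun n : ℕ => a n * y ^ (2 * n + 1) := by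
  refine .of_norm_bounded (summable_two_mul_add_one_mul_pow_two_mul (r := |y|) (by rwa [abs_abs]))
    fun n => ?_
  rw [Real.norm_eq_abs, abs_mul, abs_pow]
  calc |a n| * |y| ^ (2 * n + 1) ≤ 1 * |y| ^ (2 * n) :=
        mul_le_mul (ha n) (pow_le_pow_of_le_one (abs_nonneg y) hy.le (Nat.le_succ _))
          (by positivity) zero_le_one
    _ ≤ (2 * n + 1) * |y| ^ (2 * n) := by gcongr; linarith [n.cast_nonneg (α := ℝ)]

theorem hasDerivAt_tsum_mul_pow_two_mul_add_one (ha : ∀ n, |a n| ≤ 1) {y : ℝ} (hy : |y| < 1) :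
    HasDerivAt (fun x => ∑' n, a n * x ^ (2 * n + 1))
      (∑' n : ℕ, (2 * n + 1 : ℝ) * a n * y ^ (2 * n)) y := by
  set r := (|y| + 1) / 2 with hr_def
  have hr : |r| < 1 := by rw [abs_of_nonneg (by positivity)]; linarith
  have hyr : y ∈ Set.Ioo (-r) r := abs_lt.mp (by linarith)
  have h0r : (0 : ℝ) ∈ Set.Ioo (-r) r := ⟨by linarith [abs_nonneg y], by linarith [abs_nonneg y]⟩
  have hderiv (n : ℕ) (x : ℝ) :
      HasDerivAt (fun x => a n * x ^ (2 * n + 1)) ((2 * n + 1 : ℝ) * a n * x ^ (2 * n)) x := by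
    refine ((hasDerivAt_pow (2 * n + 1) x).const_mul (a n)).congr_deriv ?_
    rw [add_tsub_cancel_right]; push_cast; ring
  have hsum0 : Summable fun n => a n * (0 : ℝ) ^ (2 * n + 1) := by
    simp only [zero_pow (Nat.succ_ne_zero _), mul_zero]; exact summable_zero
  exact hasDerivAt_tsum_of_isPreconnected (summable_two_mul_add_one_mul_pow_two_mul hr)
    isOpen_Ioo isPreconnected_Ioo (fun n x _ => hderiv n x)
    (fun n x hx => norm_two_mul_add_one_mul_pow_le ha n (abs_lt.mpr hx).le) h0r hsum0 hyr

end OddPowerSeries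

lemma one_sub_sq_mul_tsum_arcsinCoeff {y : ℝ} (hy : |y| < 1) :
    (1 - y ^ 2) * ∑' n : ℕ, (2 * n + 1 : ℝ) * arcsinCoeff n * y ^ (2 * n) =
      1 + y * ∑' n, arcsinCoeff n * y ^ (2 * n + 1) := by
  set T := ∑' n : ℕ, (2 * n + 1 : ℝ) * arcsinCoeff n * y ^ (2 * n)
  set G := ∑' n, arcsinCoeff n * y ^ (2 * n + 1)
  have hT := (summable_two_mul_add_one_mul_pow abs_arcsinCoeff_le_one hy).hasSum
  have hG := (summable_mul_pow_two_mul_add_one abs_arcsinCoeff_le_one hy).hasSum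
  have hshift : HasSum (fun n : ℕ => (2 * (n + 1 : ℕ) + 1 : ℝ) * arcsinCoeff (n + 1) *
      y ^ (2 * (n + 1))) (T - 1) := by
    have := (hasSum_nat_add_iff' 1).mpr hT
    simpa [arcsinCoeff_zero] using this
  have hsplit : HasSum (fun n : ℕ => (2 * (n + 1 : ℕ) + 1 : ℝ) * arcsinCoeff (n + 1) *
      y ^ (2 * (n + 1))) (y ^ 2 * T + y * G) := by
    refine ((hT.mul_left (y ^ 2)).add (hG.mul_left y)).congr_fun fun n => ?_
    push_cast
    linear_combination y ^ (2 * n + 2) * arcsinCoeff_succ n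
  linear_combination hshift.unique hsplit

theorem arcsin_eq_sqrt_mul_tsum {x : ℝ} (hx : |x| < 1) :
    arcsin x = √(1 - x ^ 2) * ∑' n, arcsinCoeff n * x ^ (2 * n + 1) := by
  set G := fun y : ℝ => ∑' n, arcsinCoeff n * y ^ (2 * n + 1)
  set H := fun y => arcsin y - √(1 - y ^ 2) * G y
  have hH (y : ℝ) (hy : y ∈ Set.Ioo (-1) 1) : HasDerivAt H 0 y := by
    have hy' : |y| < 1 := abs_lt.mpr hy
    have hpos : 0 < 1 - y ^ 2 := sub_pos.mpr ((sq_lt_one_iff_abs_lt_one y).mpr hy')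
    have hsqrt : HasDerivAt (fun y => √(1 - y ^ 2)) (-(2 * y) / (2 * √(1 - y ^ 2))) y :=
      (((hasDerivAt_pow 2 y).const_sub 1).congr_deriv (by simp)).sqrt hpos.ne'
    refine ((hasDerivAt_arcsin hy.1.ne' hy.2.ne).sub (hsqrt.mul
      (hasDerivAt_tsum_mul_pow_two_mul_add_one abs_arcsinCoeff_le_one hy'))).congr_deriv ?_
    have hs : √(1 - y ^ 2) ^ 2 = 1 - y ^ 2 := sq_sqrt hpos.le
    have := one_sub_sq_mul_tsum_arcsinCoeff hy'
    rw [← hs] at this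
    field_simp
    linear_combination -this
  have hconst := isOpen_Ioo.is_const_of_deriv_eq_zero isPreconnected_Ioo
    (fun y hy => (hH y hy).differentiableAt.differentiableWithinAt)
    (fun y hy => (hH y hy).deriv) (abs_lt.mp hx)
    (show (0 : ℝ) ∈ Set.Ioo (-1) 1 by norm_num)
  have hH0 : H 0 = 0 := by simp [H, G]
  linarith [hconst.trans hH0]

theorem arcsin_central_binomial_series (z : ℝ) (hz : |z| < 1) :
    z * Real.arcsin z / Real.sqrt (1 - z ^ 2) =
      ∑' m : ℕ, (2 * z) ^ (2 * (m + 1)) /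
        ((Nat.choose (2 * (m + 1)) (m + 1) : ℝ) * (2 * (m + 1))) := by
  have hsqrt : √(1 - z ^ 2) ≠ 0 :=
    (sqrt_pos.mpr (sub_pos.mpr ((sq_lt_one_iff_abs_lt_one z).mpr hz))).ne'
  simp_rw [two_mul_pow_div_choose_eq, tsum_mul_left, arcsin_eq_sqrt_mul_tsum hz]
  field_simp
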